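/- Let λ be a partition of n. Then dim S^λ = ∏_{p prime, r ≥ 1} p^{⌊n/p^r⌋ - wt_{p^r}(λ)}, where dim S^λ = n! / ∏_{c ∈ cells(λ)} h_c is given by the hook length formula. -/

import Mathlib

/-- Beta-set (first-column hook lengths with padding) of a partition given as a
weakly decreasing list of parts: `b_i = λ_i + (r - 1 - i)` (0-indexed). -/
def betaSet (L : List ℕ) : List ℕ :=
  (List.range L.length).map (fun i => L.getD i 0 + (L.length - 1 - i))

/-- The `l`-weight of a partition: the number of rim `l`-hooks removed to reach
the `l`-core, computed on the `l`-abacus as the total number of single-runner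
moves needed to push all beads up. -/
def lWeight (l : ℕ) (L : List ℕ) : ℕ :=
  ((betaSet L).map (· / l)).sum -
    ∑ j ∈ Finset.range l, (((betaSet L).filter (fun b => b % l = j)).length).choose 2

/-- Beta-set of the `l`-core: on each runner, push all beads to the lowest positions. -/
def lCoreBeta (l : ℕ) (L : List ℕ) : List ℕ :=
  (List.range l).flatMap (fun j =>
    (List.range (((betaSet L).filter (fun b => b % l = j)).length)).map (fun k => j + l * k))

/-- The `l`-core of a partition, recovered from the pushed-up beta-set. -/
def lCore (l : ℕ) (L : List ℕ) : List ℕ :=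
  (((lCoreBeta l L).mergeSort (fun a b => b ≤ a)).mapIdx
    (fun i b => b - (L.length - 1 - i))).filter (fun a => 0 < a)

/-- Hook length of the cell in row `i`, column `j` (both 0-indexed):
arm + leg + 1. -/
def hookLen (L : List ℕ) (i j : ℕ) : ℕ :=
  (L.getD i 0 - j) + ((L.drop (i + 1)).filter (fun a => j < a)).length

/-!
By Legendre's formula and by counting the prime-power divisors of each hook, the claim amounts to:
the number of hooks divisible by `l` is the `l`-weight, and `l * wt_l(λ) ≤ n`.

For the first, let `b` be the β-number of row `i`. The hook lengths of row `i` together with the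
gaps `b - b'` to the smaller β-numbers `b'` are exactly `1, …, b`, so row `i` has `⌊b / l⌋` hooks
divisible by `l`, less the number of smaller β-numbers congruent to `b` mod `l`. Summing over the
rows, these pairs are the `∑ C(m_j, 2)` pairs of beads on a common runner of the `l`-abacus.

For the second, the pushed-up abacus carries the same `r` beads at distinct positions, whose sum
`n + C(r, 2) - l * wt_l(λ)` is therefore at least `C(r, 2)`.
-/

open Finset

theorem List.length_filter_eq_card (L : List ℕ) (p : ℕ → Bool) :
    (L.filter p).length = #{k ∈ Finset.range L.length | p (L.getD k 0)} := by
  induction L with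
  | nil => simp
  | cons a L ih =>
    simp only [List.getD_eq_getElem?_getD] at ih ⊢
    rw [card_filter, List.length_cons, Finset.sum_range_succ', ← card_filter]
    simp only [List.filter_cons]
    split <;> simp_all

theorem List.length_filter_drop (L : List ℕ) (p : ℕ → Bool) (i : ℕ) :
    ((L.drop i).filter p).length = #{k ∈ Finset.Ico i L.length | p (L.getD k 0)} := by
  rw [List.length_filter_eq_card, card_filter, card_filter, sum_Ico_eq_sum_range]
  simp [List.getD_eq_getElem?_getD]

theorem List.sum_eq_sum_range_getD (L : List ℕ) :
    L.sum = ∑ i ∈ Finset.range L.length, L.getD i 0 := by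
  induction L with
  | nil => simp
  | cons a L ih => simp [Finset.sum_range_succ', ih, add_comm]

theorem Finset.sum_card_filter_lt_eq_choose_two {α : Type*} [LinearOrder α] (s : Finset α) :
    ∑ i ∈ s, #{k ∈ s | i < k} = (#s).choose 2 := by
  induction s using Finset.induction_on_max with
  | empty => simp
  | insert a s ha ih =>
    have has : a ∉ s := fun h => (ha a h).false
    rw [sum_insert has, card_insert_of_notMem has, Nat.choose_succ_succ', Nat.choose_one_right,
      filter_insert, if_neg (lt_irrefl a), filter_false_of_mem fun k hk => (ha k hk).not_gt,
      card_empty, zero_add, ← ih, card_eq_sum_ones s, ← sum_add_distrib]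
    refine sum_congr rfl fun i hi => ?_
    rw [filter_insert, if_pos (ha i hi), card_insert_of_notMem (by simp [has]), add_comm]

theorem Finset.choose_two_card_le_sum (s : Finset ℕ) : (#s).choose 2 ≤ ∑ x ∈ s, x :=
  calc (#s).choose 2 = ∑ i ∈ s, #{k ∈ s | k < i} :=
        -- in `ℕᵒᵈ` the lemma counts the smaller elements
        (sum_card_filter_lt_eq_choose_two (α := ℕᵒᵈ) s).symm
    _ ≤ ∑ x ∈ s, x := sum_le_sum fun i _ =>
        (card_le_card fun _ hk => mem_range.2 (mem_filter.1 hk).2).trans (card_range i).le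

theorem Finset.sum_card_Ioo_eq_sum_choose_two {β : Type*} [DecidableEq β] (r : ℕ) (c : ℕ → β)
    (t : Finset β) (hc : ∀ i ∈ range r, c i ∈ t) :
    ∑ i ∈ range r, #{k ∈ Ioo i r | c k = c i} = ∑ a ∈ t, (#{i ∈ range r | c i = a}).choose 2 := by
  rw [← sum_fiberwise_of_maps_to hc]
  refine sum_congr rfl fun a _ => ?_
  rw [← sum_card_filter_lt_eq_choose_two]
  refine sum_congr rfl fun i hi => congrArg card ?_
  rw [mem_filter, mem_range] at hi
  ext k
  simp only [mem_filter, mem_Ioo, mem_range, hi.2]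
  tauto

/-- The abacus with `m j` beads on runner `j`, all pushed to the top, occupies the `∑ m j`
distinct positions `j + l * k` (`k < m j`); their sum is the right-hand side. -/
theorem choose_two_sum_le_sum_abacus (l : ℕ) (m : ℕ → ℕ) :
    (∑ j ∈ range l, m j).choose 2 ≤ ∑ j ∈ range l, (j * m j + l * (m j).choose 2) := by
  set T := (range l).sigma fun j => range (m j)
  have hinj : Set.InjOn (fun x : (_ : ℕ) × ℕ => x.1 + l * x.2) T := by
    rintro ⟨j, k⟩ hjk ⟨j', k'⟩ hjk' h
    simp only [T, coe_sigma, Set.mem_sigma_iff, coe_range, Set.mem_Iio] at hjk hjk' h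
    have hj : j = j' := by
      simpa [Nat.add_mul_mod_self_left, Nat.mod_eq_of_lt hjk.1, Nat.mod_eq_of_lt hjk'.1]
        using congrArg (· % l) h
    subst hj
    have : k = k' := Nat.eq_of_mul_eq_mul_left (by omega) (Nat.add_left_cancel h)
    subst this; rfl
  have hcard : #(T.image fun x => x.1 + l * x.2) = ∑ j ∈ range l, m j := by
    rw [card_image_of_injOn hinj, card_sigma]; simp
  have hsum : ∑ y ∈ T.image (fun x => x.1 + l * x.2), y =
      ∑ j ∈ range l, (j * m j + l * (m j).choose 2) := by
    rw [sum_image hinj, sum_sigma]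
    refine sum_congr rfl fun j _ => ?_
    rw [sum_add_distrib, ← mul_sum, sum_range_id, ← Nat.choose_two_right]
    simp [mul_comm]
  rw [← hcard, ← hsum]
  exact choose_two_card_le_sum _

/-- The `i`-th β-number of `L`; `betaSet L` lists them. -/
def betaNum (L : List ℕ) (i : ℕ) : ℕ := L.getD i 0 + (L.length - 1 - i)

def leg (L : List ℕ) (i j : ℕ) : ℕ := #{k ∈ Ioo i L.length | j < L.getD k 0}

/-- The number of beads on runner `a` of the `l`-abacus of `L`. -/
def beadCount (l : ℕ) (L : List ℕ) (a : ℕ) : ℕ := #{i ∈ range L.length | betaNum L i % l = a}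

section Partition

variable {L : List ℕ}

theorem hookLen_eq_sub_add_leg (L : List ℕ) (i j : ℕ) :
    hookLen L i j = (L.getD i 0 - j) + leg L i j := by
  rw [hookLen, List.length_filter_drop, Ico_add_one_left_eq_Ioo]
  simp [leg]

theorem antitone_getD (hL : L.Pairwise (· ≥ ·)) : Antitone (L.getD · 0) := by
  intro i k hik
  show L.getD k 0 ≤ L.getD i 0
  by_cases hk : k < L.length
  · rcases hik.eq_or_lt with rfl | hik
    · exact le_rfl
    · simp only [L.getD_eq_getElem 0 hk, L.getD_eq_getElem 0 (hik.trans hk)]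
      exact List.pairwise_iff_getElem.1 hL i k (hik.trans hk) hk hik
  · rw [List.getD_eq_default _ _ (not_lt.1 hk)]
    exact Nat.zero_le _

theorem betaNum_lt_betaNum (hL : L.Pairwise (· ≥ ·)) {i k : ℕ} (hik : i < k) (hk : k < L.length) :
    betaNum L k < betaNum L i := by
  have := antitone_getD hL hik.le
  simp only [betaNum] at this ⊢
  omega

theorem lt_getD_iff_le_add_leg (hL : L.Pairwise (· ≥ ·)) {i j k : ℕ} (hk : k ∈ Ioo i L.length) :
    j < L.getD k 0 ↔ k ≤ i + leg L i j := by
  rw [mem_Ioo] at hk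
  constructor
  · intro hj
    have : Ioc i k ⊆ {k ∈ Ioo i L.length | j < L.getD k 0} := fun x hx => by
      rw [mem_Ioc] at hx
      exact mem_filter.2 ⟨mem_Ioo.2 ⟨hx.1, by omega⟩, hj.trans_le (antitone_getD hL hx.2)⟩
    have := card_le_card this
    rw [Nat.card_Ioc] at this
    simp only [leg]
    omega
  · intro hkleg
    by_contra hj
    have : {k ∈ Ioo i L.length | j < L.getD k 0} ⊆ Ioo i k := fun x hx => by
      rw [mem_filter, mem_Ioo] at hx
      refine mem_Ioo.2 ⟨hx.1.1, lt_of_not_ge fun hkx => hj ?_⟩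
      exact hx.2.trans_le (antitone_getD hL hkx)
    have := card_le_card this
    rw [Nat.card_Ioo] at this
    simp only [leg] at hkleg
    omega

/-- A cell in a column reached by row `k` has a hook longer than the gap, a cell in a column not
reached by row `k` a shorter one. -/
theorem hookLen_ne_betaNum_sub (hL : L.Pairwise (· ≥ ·)) {i j k : ℕ} (hk : k ∈ Ioo i L.length) :
    hookLen L i j ≠ betaNum L i - betaNum L k := by
  have hiff := lt_getD_iff_le_add_leg hL (j := j) hk
  have hki : L.getD k 0 ≤ L.getD i 0 := antitone_getD hL (mem_Ioo.1 hk).1.le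
  rw [mem_Ioo] at hk
  rw [hookLen_eq_sub_add_leg, betaNum, betaNum]
  omega

theorem strictAntiOn_hookLen (L : List ℕ) (i : ℕ) :
    StrictAntiOn (hookLen L i) (Set.Iio (L.getD i 0)) := by
  intro j hj j' hj' hjj'
  have : leg L i j' ≤ leg L i j :=
    card_le_card (monotone_filter_right _ fun _ _ hk => hjj'.trans hk)
  simp only [Set.mem_Iio] at hj hj'
  rw [hookLen_eq_sub_add_leg, hookLen_eq_sub_add_leg]
  omega

theorem hookLen_pos (L : List ℕ) {i j : ℕ} (hj : j < L.getD i 0) : 0 < hookLen L i j := by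
  rw [hookLen_eq_sub_add_leg]
  omega

theorem hookLen_le_betaNum (L : List ℕ) (i j : ℕ) : hookLen L i j ≤ betaNum L i := by
  have : leg L i j ≤ #(Ioo i L.length) := card_filter_le _ _
  rw [Nat.card_Ioo] at this
  rw [hookLen_eq_sub_add_leg, betaNum]
  omega

theorem hookLen_le_sum (L : List ℕ) (i j : ℕ) : hookLen L i j ≤ L.sum := by
  have hleg : leg L i j ≤ ∑ k ∈ Ioo i L.length, L.getD k 0 :=
    calc leg L i j = ∑ k ∈ {k ∈ Ioo i L.length | j < L.getD k 0}, 1 := card_eq_sum_ones _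
      _ ≤ ∑ k ∈ {k ∈ Ioo i L.length | j < L.getD k 0}, L.getD k 0 :=
        sum_le_sum fun k hk => Nat.one_le_of_lt (mem_filter.1 hk).2
      _ ≤ ∑ k ∈ Ioo i L.length, L.getD k 0 := sum_le_sum_of_subset (filter_subset _ _)
  have hrow : ∑ k ∈ insert i (Ioo i L.length), L.getD k 0 ≤ ∑ k ∈ range L.length, L.getD k 0 :=
    sum_le_sum_of_ne_zero fun k _ hk => mem_range.2 <| by
      by_contra hkr
      exact hk (L.getD_eq_default _ (not_lt.1 hkr))
  rw [sum_insert left_notMem_Ioo] at hrow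
  rw [hookLen_eq_sub_add_leg, L.sum_eq_sum_range_getD]
  omega

theorem disjoint_image_hookLen_image_betaNum_sub (hL : L.Pairwise (· ≥ ·)) (i : ℕ) :
    Disjoint ((range (L.getD i 0)).image (hookLen L i))
      ((Ioo i L.length).image fun k => betaNum L i - betaNum L k) := by
  rw [disjoint_left]
  rintro _ hj hk
  obtain ⟨j, -, rfl⟩ := mem_image.1 hj
  obtain ⟨k, hk, hjk⟩ := mem_image.1 hk
  exact hookLen_ne_betaNum_sub hL hk hjk.symm

theorem injOn_betaNum_sub (hL : L.Pairwise (· ≥ ·)) (i : ℕ) :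
    Set.InjOn (fun k => betaNum L i - betaNum L k) (Ioo i L.length) := by
  intro k hk k' hk' h
  simp only [coe_Ioo, Set.mem_Ioo] at hk hk' h
  have := betaNum_lt_betaNum hL hk.1 hk.2
  have := betaNum_lt_betaNum hL hk'.1 hk'.2
  rcases lt_trichotomy k k' with hkk | rfl | hkk
  · have := betaNum_lt_betaNum hL hkk hk'.2
    omega
  · rfl
  · have := betaNum_lt_betaNum hL hkk hk.2
    omega

theorem injOn_hookLen (L : List ℕ) (i : ℕ) : Set.InjOn (hookLen L i) (range (L.getD i 0)) := by
  rw [coe_range]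
  exact (strictAntiOn_hookLen L i).injOn

theorem image_hookLen_union_image_betaNum_sub (hL : L.Pairwise (· ≥ ·)) (i : ℕ) :
    (range (L.getD i 0)).image (hookLen L i) ∪
      (Ioo i L.length).image (fun k => betaNum L i - betaNum L k) = Icc 1 (betaNum L i) := by
  refine eq_of_subset_of_card_le (fun x hx => ?_) ?_
  · rw [mem_Icc]
    rcases mem_union.1 hx with hx | hx
    · obtain ⟨j, hj, rfl⟩ := mem_image.1 hx
      exact ⟨hookLen_pos L (mem_range.1 hj), hookLen_le_betaNum L i j⟩
    · obtain ⟨k, hk, rfl⟩ := mem_image.1 hx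
      have := betaNum_lt_betaNum hL (mem_Ioo.1 hk).1 (mem_Ioo.1 hk).2
      omega
  · rw [card_union_of_disjoint (disjoint_image_hookLen_image_betaNum_sub hL i),
      card_image_of_injOn (injOn_hookLen L i), card_image_of_injOn (injOn_betaNum_sub hL i),
      card_range, Nat.card_Ioo, Nat.card_Icc, betaNum]
    omega

theorem card_filter_dvd_hookLen_add_card_filter_mod_eq (hL : L.Pairwise (· ≥ ·)) (l i : ℕ) :
    #{j ∈ range (L.getD i 0) | l ∣ hookLen L i j} +
      #{k ∈ Ioo i L.length | betaNum L k % l = betaNum L i % l} = betaNum L i / l := by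
  have hdvd : ∀ k ∈ Ioo i L.length,
      l ∣ betaNum L i - betaNum L k ↔ betaNum L k % l = betaNum L i % l := fun k hk =>
    (Nat.modEq_iff_dvd' (betaNum_lt_betaNum hL (mem_Ioo.1 hk).1 (mem_Ioo.1 hk).2).le).symm
  calc _ = #{x ∈ (range (L.getD i 0)).image (hookLen L i) | l ∣ x} +
        #{x ∈ (Ioo i L.length).image (fun k => betaNum L i - betaNum L k) | l ∣ x} := by
        rw [filter_image, filter_image, card_image_of_injOn ((injOn_hookLen L i).mono
          (filter_subset _ _)), card_image_of_injOn ((injOn_betaNum_sub hL i).mono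
          (filter_subset _ _)), filter_congr hdvd]
    _ = #{x ∈ Icc 1 (betaNum L i) | l ∣ x} := by
        rw [← image_hookLen_union_image_betaNum_sub hL i, filter_union,
          card_union_of_disjoint ((disjoint_image_hookLen_image_betaNum_sub hL i).mono
            (filter_subset _ _) (filter_subset _ _))]
    _ = betaNum L i / l := Nat.Ioc_filter_dvd_card_eq_div _ _

theorem lWeight_eq (l : ℕ) (L : List ℕ) :
    lWeight l L = ∑ i ∈ range L.length, betaNum L i / l -
      ∑ a ∈ range l, (beadCount l L a).choose 2 := by
  simp only [lWeight, betaSet, List.map_map, List.filter_map, List.length_map]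
  -- sums and filters over `Finset.range` unfold to the list operations over `List.range`
  rfl

theorem sum_card_filter_dvd_hookLen_eq_lWeight (hL : L.Pairwise (· ≥ ·)) {l : ℕ} (hl : 0 < l) :
    ∑ i ∈ range L.length, #{j ∈ range (L.getD i 0) | l ∣ hookLen L i j} = lWeight l L := by
  have hrows := sum_congr (s₁ := range L.length) rfl fun i _ =>
    card_filter_dvd_hookLen_add_card_filter_mod_eq hL l i
  rw [sum_add_distrib] at hrows
  have hpairs : ∑ i ∈ range L.length, #{k ∈ Ioo i L.length | betaNum L k % l = betaNum L i % l} =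
      ∑ a ∈ range l, (beadCount l L a).choose 2 :=
    sum_card_Ioo_eq_sum_choose_two L.length (betaNum L · % l) (range l)
      fun i _ => mem_range.2 (Nat.mod_lt _ hl)
  rw [lWeight_eq]
  omega

theorem sum_betaNum (L : List ℕ) :
    ∑ i ∈ range L.length, betaNum L i = L.sum + L.length.choose 2 := by
  simp only [betaNum, sum_add_distrib, ← L.sum_eq_sum_range_getD,
    sum_range_reflect (fun i => i) L.length, sum_range_id, Nat.choose_two_right]

theorem mul_lWeight_le {l : ℕ} (hl : 0 < l) (L : List ℕ) : l * lWeight l L ≤ L.sum := by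
  rw [lWeight_eq, Nat.mul_sub]
  have hmaps : ∀ i ∈ range L.length, betaNum L i % l ∈ range l :=
    fun i _ => mem_range.2 (Nat.mod_lt _ hl)
  have hcard : L.length = ∑ a ∈ range l, beadCount l L a := by
    simpa [beadCount] using card_eq_sum_card_fiberwise hmaps
  have hmod : ∑ i ∈ range L.length, betaNum L i % l = ∑ a ∈ range l, a * beadCount l L a := by
    rw [← sum_fiberwise_of_maps_to hmaps]
    refine sum_congr rfl fun a _ => ?_
    exact (sum_const_nat fun i hi => (mem_filter.1 hi).2).trans (mul_comm _ _)
  have hdiv : ∑ i ∈ range L.length, betaNum L i =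
      l * ∑ i ∈ range L.length, betaNum L i / l + ∑ i ∈ range L.length, betaNum L i % l := by
    rw [mul_sum, ← sum_add_distrib]
    exact sum_congr rfl fun i _ => (Nat.div_add_mod _ _).symm
  have habacus := choose_two_sum_le_sum_abacus l (beadCount l L)
  rw [← hcard, sum_add_distrib, ← mul_sum, ← hmod] at habacus
  have := sum_betaNum L
  omega

end Partition

theorem Nat.factorization_eq_card_filter_Icc_pow_dvd {p h n : ℕ} (hp : p.Prime) (h0 : h ≠ 0)
    (hhn : h ≤ n) : h.factorization p = #{t ∈ Icc 1 n | p ^ t ∣ h} := by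
  rw [Nat.factorization_eq_card_pow_dvd h hp,
    Nat.Ico_filter_pow_dvd_eq hp h0 (hhn.trans (Nat.lt_pow_self hp.one_lt).le)]

theorem Nat.factorization_factorial_eq_sum_Icc {p : ℕ} (hp : p.Prime) (n : ℕ) :
    n.factorial.factorization p = ∑ t ∈ Icc 1 n, n / p ^ t := by
  rw [Nat.factorization_factorial hp (Nat.lt_succ_of_le (Nat.log_le_self p n)),
    Nat.succ_eq_add_one, Ico_add_one_right_eq_Icc]

theorem factorization_prod_hookLen {L : List ℕ} (hL : L.Pairwise (· ≥ ·)) {p : ℕ} (hp : p.Prime) :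
    (∏ i ∈ range L.length, ∏ j ∈ range (L.getD i 0), hookLen L i j).factorization p =
      ∑ t ∈ Icc 1 L.sum, lWeight (p ^ t) L := by
  have h0 : ∀ i, ∀ j ∈ range (L.getD i 0), hookLen L i j ≠ 0 :=
    fun i _ hj => (hookLen_pos L (mem_range.1 hj)).ne'
  calc _ = ∑ i ∈ range L.length, ∑ j ∈ range (L.getD i 0), (hookLen L i j).factorization p := by
        simp only [Nat.factorization_prod fun i _ => prod_ne_zero_iff.2 (h0 i),
          Nat.factorization_prod (h0 _), Finsupp.finsetSum_apply]
    _ = ∑ i ∈ range L.length, ∑ j ∈ range (L.getD i 0),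
          ∑ t ∈ Icc 1 L.sum, if p ^ t ∣ hookLen L i j then 1 else 0 := by
        refine sum_congr rfl fun i _ => sum_congr rfl fun j hj => ?_
        rw [Nat.factorization_eq_card_filter_Icc_pow_dvd hp (h0 i j hj) (hookLen_le_sum L i j),
          card_filter]
    _ = ∑ t ∈ Icc 1 L.sum, ∑ i ∈ range L.length,
          #{j ∈ range (L.getD i 0) | p ^ t ∣ hookLen L i j} := by
        simp only [card_filter]
        rw [sum_congr rfl fun i _ => sum_comm, sum_comm]
    _ = ∑ t ∈ Icc 1 L.sum, lWeight (p ^ t) L :=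
        sum_congr rfl fun t _ => sum_card_filter_dvd_hookLen_eq_lWeight hL (pow_pos hp.pos t)

theorem statement4_general (n : ℕ) (L : List ℕ) (hsorted : L.Pairwise (· ≥ ·))
    (hsum : L.sum = n) :
    (∏ i ∈ Finset.range L.length, ∏ j ∈ Finset.range (L.getD i 0), hookLen L i j)
      ∣ n.factorial ∧
    ∀ p : ℕ, p.Prime →
      (n.factorial /
        ∏ i ∈ Finset.range L.length, ∏ j ∈ Finset.range (L.getD i 0),
          hookLen L i j).factorization p
        = ∑ r ∈ Finset.Icc 1 n, (n / p ^ r - lWeight (p ^ r) L) := by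
  subst hsum
  set H := ∏ i ∈ range L.length, ∏ j ∈ range (L.getD i 0), hookLen L i j
  have hH : H ≠ 0 := prod_ne_zero_iff.2 fun i _ => prod_ne_zero_iff.2 fun _ hj =>
    (hookLen_pos L (mem_range.1 hj)).ne'
  have hweight : ∀ p : ℕ, p.Prime → ∀ t, lWeight (p ^ t) L ≤ L.sum / p ^ t := fun p hp t =>
    (Nat.le_div_iff_mul_le (pow_pos hp.pos t)).2 <|
      (mul_comm _ _).trans_le (mul_lWeight_le (pow_pos hp.pos t) L)
  have hdvd : H ∣ L.sum.factorial :=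
    (Nat.factorization_prime_le_iff_dvd hH (Nat.factorial_ne_zero _)).1 fun p hp => by
      rw [factorization_prod_hookLen hsorted hp, Nat.factorization_factorial_eq_sum_Icc hp]
      exact sum_le_sum fun t _ => hweight p hp t
  refine ⟨hdvd, fun p hp => ?_⟩
  rw [Nat.factorization_div hdvd, Finsupp.tsub_apply, factorization_prod_hookLen hsorted hp,
    Nat.factorization_factorial_eq_sum_Icc hp, sum_tsub_distrib _ fun t _ => hweight p hp t]

/-- Hook length formula factorization: `dim S^λ = n! / ∏ h_c` and its prime
factorization is `∏_{p, r ≥ 1} p^{⌊n/p^r⌋ - wt_{p^r}(λ)}`, i.e. the exponent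
of each prime `p` in `dim S^λ` is `∑_{r ≥ 1} (⌊n/p^r⌋ - wt_{p^r}(λ))`. -/
theorem statement4 (n : ℕ) (L : List ℕ) (hsorted : L.Pairwise (· ≥ ·))
    (hpos : ∀ a ∈ L, 0 < a) (hsum : L.sum = n) :
    (∏ i ∈ Finset.range L.length, ∏ j ∈ Finset.range (L.getD i 0), hookLen L i j)
      ∣ n.factorial ∧
    ∀ p : ℕ, p.Prime →
      (n.factorial /
        ∏ i ∈ Finset.range L.length, ∏ j ∈ Finset.range (L.getD i 0),
          hookLen L i j).factorization p
        = ∑ r ∈ Finset.Icc 1 n, (n / p ^ r - lWeight (p ^ r) L) :=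
  statement4_general n L hsorted hsum
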